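/- arXiv:1012.1904 — 5 statements merged into one kernel-verified Lean document; each statement's English description precedes it below -/
import Mathlib

section
/- If all entries of the I×J matrix Π are nonnegative and all entries of the vector ν ∈ ℝ^{I+J} are strictly positive, then the system of I+J quadratic equations β_i² + Σ_{j=1}^J β_i β_{I+j} Π_{ij} = ν_i (for 1 ≤ i ≤ I) and β_{I+j}² + Σ_{i=1}^I β_i β_{I+j} Π_{ij} = ν_{I+j} (for 1 ≤ j ≤ J) has exactly one solution β with all components strictly positive. -/
/-!
Write the system as `β_k ^ 2 + β_k ∑_l M_kl β_l = ν_k` for the symmetric block matrix `M` with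
off-diagonal blocks `Π` and `Πᵀ`. In the coordinates `β = exp x` it is the equation `∇F(x) = 0` for
the potential `F(x) = ∑_k (exp (2 x_k) / 2 - ν_k x_k) + ½ ∑_{k,l} M_kl exp (x_k + x_l)`, which is
coercive because `ν > 0` and `M ≥ 0`; a global minimiser of `F` is a solution.

For uniqueness, pair the difference of the equations at two positive solutions `β`, `γ` with
`log β - log γ`. After symmetrising the `M`-part, every term has the form
`(u - v) * (log u - log v) ≥ 0`, with `u, v` equal to `β_k ^ 2, γ_k ^ 2` or `β_k β_l, γ_k γ_l`;
the sum vanishes, so `β_k ^ 2 = γ_k ^ 2` for all `k`.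
-/

open Finset Real Filter

lemma sub_mul_log_sub_log_nonneg {u v : ℝ} (hu : 0 < u) (hv : 0 < v) :
    0 ≤ (u - v) * (log u - log v) := by
  rcases le_total u v with h | h
  · exact mul_nonneg_of_nonpos_of_nonpos (sub_nonpos.2 h) (sub_nonpos.2 (log_le_log hu h))
  · exact mul_nonneg (sub_nonneg.2 h) (sub_nonneg.2 (log_le_log hv h))

lemma sub_mul_log_sub_log_pos {u v : ℝ} (hu : 0 < u) (hv : 0 < v) (huv : u ≠ v) :
    0 < (u - v) * (log u - log v) := by
  rcases huv.lt_or_gt with h | h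
  · exact mul_pos_of_neg_of_neg (sub_neg.2 h) (sub_neg.2 (log_lt_log hu h))
  · exact mul_pos (sub_pos.2 h) (sub_pos.2 (log_lt_log hv h))

lemma mul_abs_sub_two_mul_sq_le_exp (c t : ℝ) :
    c * |t| - 2 * c ^ 2 ≤ exp (2 * t) / 2 - c * t := by
  rcases le_or_gt 0 t with ht | ht
  · have h : (t + 1) ^ 2 ≤ exp (2 * t) := by
      rw [mul_comm, exp_mul, rpow_two]
      exact pow_le_pow_left₀ (by linarith) (add_one_le_exp t) 2
    rw [abs_of_nonneg ht]
    nlinarith [sq_nonneg (t - 2 * c)]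
  · rw [abs_of_neg ht]
    nlinarith [exp_pos (2 * t)]

section

variable {κ : Type*} [Fintype κ]

lemma sum_sum_mul_add_of_symm {R : Type*} [CommSemiring R] {T : κ → κ → R}
    (hT : ∀ k l, T k l = T l k) (a : κ → R) :
    ∑ k, ∑ l, T k l * (a k + a l) = 2 * ∑ k, ∑ l, T k l * a k := by
  simp only [mul_add, sum_add_distrib]
  rw [sum_comm (f := fun k l => T k l * a l), two_mul]
  simp only [hT]

def chooSiowMap (M : Matrix κ κ ℝ) (β : κ → ℝ) (k : κ) : ℝ :=
  β k ^ 2 + ∑ l, β k * β l * M k l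

noncomputable def chooSiowPotential (M : Matrix κ κ ℝ) (ν x : κ → ℝ) : ℝ :=
  ∑ k, (exp (2 * x k) / 2 - ν k * x k) + (∑ k, ∑ l, M k l * exp (x k + x l)) / 2

variable {M : Matrix κ κ ℝ} {ν : κ → ℝ}

lemma continuous_chooSiowPotential (M : Matrix κ κ ℝ) (ν : κ → ℝ) :
    Continuous (chooSiowPotential M ν) := by
  unfold chooSiowPotential
  fun_prop

lemma mul_abs_sub_le_chooSiowPotential (hM : ∀ k l, 0 ≤ M k l) (hν : ∀ k, 0 ≤ ν k)
    (x : κ → ℝ) (k : κ) :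
    ν k * |x k| - ∑ l, 2 * ν l ^ 2 ≤ chooSiowPotential M ν x := by
  have hsingle : ν k * |x k| ≤ ∑ l, ν l * |x l| :=
    single_le_sum (f := fun l => ν l * |x l|) (fun l _ => mul_nonneg (hν l) (abs_nonneg _))
      (mem_univ k)
  have hdiag : ∑ l, (ν l * |x l| - 2 * ν l ^ 2) ≤ ∑ l, (exp (2 * x l) / 2 - ν l * x l) :=
    sum_le_sum fun l _ => mul_abs_sub_two_mul_sq_le_exp (ν l) (x l)
  have hoff : 0 ≤ ∑ k, ∑ l, M k l * exp (x k + x l) :=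
    sum_nonneg fun k _ => sum_nonneg fun l _ => mul_nonneg (hM k l) (exp_pos _).le
  rw [sum_sub_distrib] at hdiag
  unfold chooSiowPotential
  linarith

lemma tendsto_chooSiowPotential_cocompact (hM : ∀ k l, 0 ≤ M k l) (hν : ∀ k, 0 < ν k) :
    Tendsto (chooSiowPotential M ν) (cocompact (κ → ℝ)) atTop := by
  rw [← coprodᵢ_cocompact, Filter.coprodᵢ, tendsto_iSup]
  intro k
  have habs : Tendsto (fun t : ℝ => ν k * |t| - ∑ l, 2 * ν l ^ 2) (cocompact ℝ) atTop :=
    tendsto_atTop_add_const_right _ _ (tendsto_norm_cocompact_atTop.const_mul_atTop (hν k))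
  exact tendsto_atTop_mono (mul_abs_sub_le_chooSiowPotential hM (fun l => (hν l).le) · k)
    (habs.comp tendsto_comap)

lemma hasDerivAt_chooSiowPotential_line (hM : M.IsSymm) (ν x v : κ → ℝ) :
    HasDerivAt (fun t : ℝ => chooSiowPotential M ν (x + t • v))
      (∑ k, v k * (chooSiowMap M (fun l => exp (x l)) k - ν k)) 0 := by
  have hline : ∀ k, HasDerivAt (fun t : ℝ => (x + t • v) k) (v k) 0 := fun k => by
    simpa using ((hasDerivAt_id (0 : ℝ)).mul_const (v k)).const_add (x k)
  have hdiag : HasDerivAt (fun t : ℝ => ∑ k, (exp (2 * (x + t • v) k) / 2 - ν k * (x + t • v) k))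
      (∑ k, (exp (2 * x k) * v k - ν k * v k)) 0 :=
    HasDerivAt.fun_sum fun k _ => by
      refine ((((hline k).const_mul 2).exp.div_const 2).fun_sub
        ((hline k).const_mul (ν k))).congr_deriv ?_
      simp only [Pi.add_apply, Pi.smul_apply, smul_eq_mul, zero_mul, add_zero]
      ring
  have hoff : HasDerivAt (fun t : ℝ => (∑ k, ∑ l, M k l * exp ((x + t • v) k + (x + t • v) l)) / 2)
      ((∑ k, ∑ l, M k l * exp (x k + x l) * (v k + v l)) / 2) 0 := by
    refine HasDerivAt.div_const (HasDerivAt.fun_sum fun k _ => HasDerivAt.fun_sum fun l _ => ?_) 2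
    refine (((hline k).fun_add (hline l)).exp.const_mul (M k l)).congr_deriv ?_
    simp only [Pi.add_apply, Pi.smul_apply, smul_eq_mul, zero_mul, add_zero]
    ring
  refine (hdiag.fun_add hoff).congr_deriv ?_
  rw [sum_sum_mul_add_of_symm (T := fun k l => M k l * exp (x k + x l))
    (fun k l => by rw [hM.apply, add_comm]) v, mul_div_cancel_left₀ _ two_ne_zero,
    ← sum_add_distrib]
  refine sum_congr rfl fun k _ => ?_
  simp only [chooSiowMap, exp_add, two_mul]
  rw [← sum_mul]
  simp only [mul_comm (M k _)]
  ring

theorem exists_pos_chooSiowMap_eq (hM : M.IsSymm) (hM0 : ∀ k l, 0 ≤ M k l)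
    (hν : ∀ k, 0 < ν k) : ∃ β : κ → ℝ, (∀ k, 0 < β k) ∧ ∀ k, chooSiowMap M β k = ν k := by
  obtain ⟨x, hx⟩ := (continuous_chooSiowPotential M ν).exists_forall_le
    (tendsto_chooSiowPotential_cocompact hM0 hν)
  set G : κ → ℝ := fun k => chooSiowMap M (fun l => exp (x l)) k - ν k
  -- The directional derivative of the potential at its minimum `x`, in the direction of its own
  -- gradient `G`, is `‖G‖²`.
  have hmin : IsLocalMin (fun t : ℝ => chooSiowPotential M ν (x + t • G)) 0 :=
    Eventually.of_forall fun t => by simpa using hx (x + t • G)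
  have hG : ∑ k, G k * G k = 0 :=
    hmin.hasDerivAt_eq_zero (hasDerivAt_chooSiowPotential_line hM ν x G)
  refine ⟨fun k => exp (x k), fun k => exp_pos _, fun k => sub_eq_zero.1 ?_⟩
  exact mul_self_eq_zero.1
    ((sum_eq_zero_iff_of_nonneg fun k _ => mul_self_nonneg _).1 hG k (mem_univ k))

lemma sum_sum_mul_sub_mul_log_nonneg (hM : M.IsSymm) (hM0 : ∀ k l, 0 ≤ M k l)
    {β γ : κ → ℝ} (hβ : ∀ k, 0 < β k) (hγ : ∀ k, 0 < γ k) :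
    0 ≤ ∑ k, ∑ l, M k l * (β k * β l - γ k * γ l) * (log (β k) - log (γ k)) := by
  have hsymm := sum_sum_mul_add_of_symm (T := fun k l => M k l * (β k * β l - γ k * γ l))
    (fun k l => by rw [hM.apply]; ring) (fun k => log (β k) - log (γ k))
  have hpairs : 0 ≤ ∑ k, ∑ l, M k l * (β k * β l - γ k * γ l) *
      ((log (β k) - log (γ k)) + (log (β l) - log (γ l))) :=
    sum_nonneg fun k _ => sum_nonneg fun l _ => by
      rw [mul_assoc, sub_add_sub_comm, ← log_mul (hβ k).ne' (hβ l).ne',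
        ← log_mul (hγ k).ne' (hγ l).ne']
      exact mul_nonneg (hM0 k l)
        (sub_mul_log_sub_log_nonneg (mul_pos (hβ k) (hβ l)) (mul_pos (hγ k) (hγ l)))
  linarith

lemma chooSiowMap_injOn (hM : M.IsSymm) (hM0 : ∀ k l, 0 ≤ M k l) :
    Set.InjOn (chooSiowMap M) {β | ∀ k, 0 < β k} := by
  intro β hβ γ hγ h
  set d : κ → ℝ := fun k => log (β k) - log (γ k)
  have hdiag : ∀ k, 0 ≤ (β k ^ 2 - γ k ^ 2) * d k := fun k => by
    rw [sq_sub_sq, mul_assoc]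
    exact mul_nonneg (add_pos (hβ k) (hγ k)).le (sub_mul_log_sub_log_nonneg (hβ k) (hγ k))
  have hrow : ∀ k, β k ^ 2 - γ k ^ 2 + ∑ l, M k l * (β k * β l - γ k * γ l) = 0 := fun k => by
    have hk : chooSiowMap M β k = chooSiowMap M γ k := congrFun h k
    have hsum : ∑ l, M k l * (β k * β l - γ k * γ l)
        = ∑ l, β k * β l * M k l - ∑ l, γ k * γ l * M k l := by
      rw [← sum_sub_distrib]
      exact sum_congr rfl fun l _ => by ring
    rw [hsum]
    unfold chooSiowMap at hk
    linarith
  have hzero : ∑ k, (β k ^ 2 - γ k ^ 2) * d k = 0 := by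
    have htotal : ∑ k, (β k ^ 2 - γ k ^ 2) * d k
        + ∑ k, ∑ l, M k l * (β k * β l - γ k * γ l) * d k = 0 := by
      rw [← sum_add_distrib]
      refine sum_eq_zero fun k _ => ?_
      rw [← sum_mul, ← add_mul, hrow k, zero_mul]
    have hoff := sum_sum_mul_sub_mul_log_nonneg hM hM0 hβ hγ
    linarith [sum_nonneg fun k (_ : k ∈ univ) => hdiag k]
  funext k
  have hk := (sum_eq_zero_iff_of_nonneg fun k _ => hdiag k).1 hzero k (mem_univ k)
  by_contra hne
  rw [sq_sub_sq, mul_assoc] at hk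
  exact (mul_pos (add_pos (hβ k) (hγ k)) (sub_mul_log_sub_log_pos (hβ k) (hγ k) hne)).ne' hk

theorem existsUnique_pos_chooSiowMap_eq (hM : M.IsSymm) (hM0 : ∀ k l, 0 ≤ M k l)
    (hν : ∀ k, 0 < ν k) : ∃! β : κ → ℝ, (∀ k, 0 < β k) ∧ ∀ k, chooSiowMap M β k = ν k := by
  obtain ⟨β, hβ, hβν⟩ := exists_pos_chooSiowMap_eq hM hM0 hν
  refine ⟨β, ⟨hβ, hβν⟩, fun γ ⟨hγ, hγν⟩ => chooSiowMap_injOn hM hM0 hγ hβ ?_⟩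
  exact funext fun k => (hγν k).trans (hβν k).symm

end

def bipartiteMatrix {α : Type*} [Zero α] {I J : ℕ} (P : Fin I → Fin J → α) :
    Matrix (Fin (I + J)) (Fin (I + J)) α :=
  Matrix.reindex finSumFinEquiv finSumFinEquiv
    (Matrix.fromBlocks 0 (Matrix.of P) (Matrix.of P).transpose 0)

lemma isSymm_bipartiteMatrix {α : Type*} [Zero α] {I J : ℕ} (P : Fin I → Fin J → α) :
    (bipartiteMatrix P).IsSymm :=
  (Matrix.IsSymm.fromBlocks Matrix.isSymm_zero rfl Matrix.isSymm_zero).submatrix _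

lemma bipartiteMatrix_nonneg {I J : ℕ} {P : Fin I → Fin J → ℝ} (hP : ∀ i j, 0 ≤ P i j)
    (k l : Fin (I + J)) : 0 ≤ bipartiteMatrix P k l := by
  induction k using Fin.addCases <;> induction l using Fin.addCases <;>
    simp [bipartiteMatrix, hP]

lemma chooSiowMap_bipartiteMatrix_castAdd {I J : ℕ} (P : Fin I → Fin J → ℝ)
    (β : Fin (I + J) → ℝ) (i : Fin I) :
    chooSiowMap (bipartiteMatrix P) β (Fin.castAdd J i) =
      β (Fin.castAdd J i) ^ 2 + ∑ j, β (Fin.castAdd J i) * β (Fin.natAdd I j) * P i j := by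
  simp [chooSiowMap, bipartiteMatrix, Fin.sum_univ_add]

lemma chooSiowMap_bipartiteMatrix_natAdd {I J : ℕ} (P : Fin I → Fin J → ℝ)
    (β : Fin (I + J) → ℝ) (j : Fin J) :
    chooSiowMap (bipartiteMatrix P) β (Fin.natAdd I j) =
      β (Fin.natAdd I j) ^ 2 + ∑ i, β (Fin.castAdd J i) * β (Fin.natAdd I j) * P i j := by
  simp [chooSiowMap, bipartiteMatrix, Fin.sum_univ_add, mul_comm (β (Fin.natAdd I j))]

theorem choo_siow_existence_uniqueness_general (I J : ℕ)
    (P : Fin I → Fin J → ℝ) (hP : ∀ i j, 0 ≤ P i j)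
    (ν : Fin (I + J) → ℝ) (hν : ∀ k, 0 < ν k) :
    ∃! β : Fin (I + J) → ℝ,
      (∀ k, 0 < β k) ∧
      (∀ i : Fin I,
        β (Fin.castAdd J i) ^ 2 +
          ∑ j : Fin J, β (Fin.castAdd J i) * β (Fin.natAdd I j) * P i j =
        ν (Fin.castAdd J i)) ∧
      (∀ j : Fin J,
        β (Fin.natAdd I j) ^ 2 +
          ∑ i : Fin I, β (Fin.castAdd J i) * β (Fin.natAdd I j) * P i j =
        ν (Fin.natAdd I j)) := by
  refine (existsUnique_congr fun β => and_congr_right fun _ => ?_).1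
    (existsUnique_pos_chooSiowMap_eq (isSymm_bipartiteMatrix P) (bipartiteMatrix_nonneg hP) hν)
  rw [Fin.forall_fin_add]
  simp only [chooSiowMap_bipartiteMatrix_castAdd, chooSiowMap_bipartiteMatrix_natAdd]

/-- **Choo–Siow inverse problem: existence and uniqueness.**
If all entries of the I×J gains matrix `P` are nonnegative and all entries of the
population vector `ν ∈ ℝ^{I+J}` are strictly positive, then the Choo–Siow system of
I+J quadratic equations has exactly one solution `β` with all components positive. -/
theorem choo_siow_existence_uniqueness (I J : ℕ) (hI : 0 < I) (hJ : 0 < J)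
    (P : Fin I → Fin J → ℝ) (hP : ∀ i j, 0 ≤ P i j)
    (ν : Fin (I + J) → ℝ) (hν : ∀ k, 0 < ν k) :
    ∃! β : Fin (I + J) → ℝ,
      (∀ k, 0 < β k) ∧
      (∀ i : Fin I,
        β (Fin.castAdd J i) ^ 2 +
          ∑ j : Fin J, β (Fin.castAdd J i) * β (Fin.natAdd I j) * P i j =
        ν (Fin.castAdd J i)) ∧
      (∀ j : Fin J,
        β (Fin.natAdd I j) ^ 2 +
          ∑ i : Fin I, β (Fin.castAdd J i) * β (Fin.natAdd I j) * P i j =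
        ν (Fin.natAdd I j)) :=
  choo_siow_existence_uniqueness_general I J P hP ν hν
end

section
/- The function H(b) = (1/2) Σ_{k=1}^{I+J} e^{2b_k} + Σ_{i=1}^I Σ_{j=1}^J Π_{ij} e^{b_i + b_{I+j}} on ℝ^{I+J} is strictly convex whenever all entries Π_{ij} are nonnegative; indeed its Hessian at any point b dominates the positive diagonal matrix diag(2e^{2b_1}, ..., 2e^{2b_{I+J}}) in the Loewner order. -/
/-!
`H` is a nonnegative combination of exponentials of linear forms, `x ↦ ∑ₜ cₜ exp (ℓₜ x)`, whose
Hessian is `∑ₜ cₜ exp (ℓₜ x) ℓₜ ℓₜᵀ ⪰ 0`. Split `H` into its diagonal part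
`½ ∑ₖ exp (2 xₖ)`, whose Hessian is exactly `diag (2 exp (2 xₖ))` and which is strictly convex
because its linear forms `2 xₖ` separate points, and the coupling part
`∑ᵢⱼ Πᵢⱼ exp (xᵢ + x_{I+j})`, which is convex with positive semidefinite Hessian.
-/

open Finset Real

section ExpSum

variable {ι E : Type*} [Fintype ι] [NormedAddCommGroup E] [NormedSpace ℝ E]

noncomputable def expSum (c : ι → ℝ) (ℓ : ι → E →L[ℝ] ℝ) (x : E) : ℝ :=
  ∑ t, c t * exp (ℓ t x)

variable (c : ι → ℝ) (ℓ : ι → E →L[ℝ] ℝ)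

lemma hasFDerivAt_const_mul_exp_clm (a : ℝ) (L : E →L[ℝ] ℝ) (x : E) :
    HasFDerivAt (fun y => a * exp (L y)) ((a * exp (L x)) • L) x := by
  simpa [smul_smul] using L.hasFDerivAt.exp.const_mul a

lemma hasFDerivAt_expSum (x : E) :
    HasFDerivAt (expSum c ℓ) (∑ t, (c t * exp (ℓ t x)) • ℓ t) x :=
  HasFDerivAt.fun_sum fun t _ => hasFDerivAt_const_mul_exp_clm (c t) (ℓ t) x

lemma iteratedFDeriv_two_expSum_apply (x v w : E) :
    iteratedFDeriv ℝ 2 (expSum c ℓ) x ![v, w] =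
      ∑ t, c t * exp (ℓ t x) * (ℓ t v * ℓ t w) := by
  have hD : HasFDerivAt (fun y => ∑ t, (c t * exp (ℓ t y)) • ℓ t)
      (∑ t, ((c t * exp (ℓ t x)) • ℓ t).smulRight (ℓ t)) x :=
    HasFDerivAt.fun_sum fun t _ =>
      (hasFDerivAt_const_mul_exp_clm (c t) (ℓ t) x).smul_const (ℓ t)
  rw [iteratedFDeriv_two_apply, funext fun y => (hasFDerivAt_expSum c ℓ y).fderiv, hD.fderiv]
  simp [mul_assoc]

lemma contDiff_expSum {n : WithTop ℕ∞} : ContDiff ℝ n (expSum c ℓ) := by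
  unfold expSum
  fun_prop

lemma exp_map_combo_le (L : E →L[ℝ] ℝ) (x y : E) {a b : ℝ} (ha : 0 ≤ a) (hb : 0 ≤ b)
    (hab : a + b = 1) : exp (L (a • x + b • y)) ≤ a * exp (L x) + b * exp (L y) := by
  simpa using convexOn_exp.2 (Set.mem_univ (L x)) (Set.mem_univ (L y)) ha hb hab

lemma exp_map_combo_lt (L : E →L[ℝ] ℝ) {x y : E} (hxy : L x ≠ L y) {a b : ℝ} (ha : 0 < a)
    (hb : 0 < b) (hab : a + b = 1) : exp (L (a • x + b • y)) < a * exp (L x) + b * exp (L y) := by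
  simpa using strictConvexOn_exp.2 (Set.mem_univ (L x)) (Set.mem_univ (L y)) hxy ha hb hab

lemma expSum_combo_eq (x y : E) (a b : ℝ) :
    a * expSum c ℓ x + b * expSum c ℓ y = ∑ t, c t * (a * exp (ℓ t x) + b * exp (ℓ t y)) := by
  simp only [expSum, mul_sum, ← sum_add_distrib]
  exact sum_congr rfl fun t _ => by ring

lemma convexOn_expSum (hc : ∀ t, 0 ≤ c t) : ConvexOn ℝ Set.univ (expSum c ℓ) := by
  refine ⟨convex_univ, fun x _ y _ a b ha hb hab => ?_⟩
  rw [smul_eq_mul, smul_eq_mul, expSum_combo_eq]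
  exact sum_le_sum fun t _ =>
    mul_le_mul_of_nonneg_left (exp_map_combo_le (ℓ t) x y ha hb hab) (hc t)

lemma strictConvexOn_expSum (hc : ∀ t, 0 < c t) (hℓ : Function.Injective fun x t => ℓ t x) :
    StrictConvexOn ℝ Set.univ (expSum c ℓ) := by
  refine ⟨convex_univ, fun x _ y _ hxy a b ha hb hab => ?_⟩
  obtain ⟨t₀, ht₀⟩ := Function.ne_iff.mp (hℓ.ne hxy)
  rw [smul_eq_mul, smul_eq_mul, expSum_combo_eq]
  refine sum_lt_sum (fun t _ => ?_) ⟨t₀, mem_univ _, ?_⟩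
  · exact mul_le_mul_of_nonneg_left (exp_map_combo_le (ℓ t) x y ha.le hb.le hab) (hc t).le
  · exact mul_lt_mul_of_pos_left (exp_map_combo_lt (ℓ t₀) ht₀ ha hb hab) (hc t₀)

end ExpSum

section Hessian

variable {ι m : Type*} [Fintype ι] [Fintype m] [DecidableEq m]

noncomputable def hessianMatrix (f : (m → ℝ) → ℝ) (x : m → ℝ) : Matrix m m ℝ :=
  Matrix.of fun k l => iteratedFDeriv ℝ 2 f x ![Pi.single k 1, Pi.single l 1]

lemma hessianMatrix_add {f g : (m → ℝ) → ℝ} (hf : ContDiff ℝ 2 f) (hg : ContDiff ℝ 2 g)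
    (x : m → ℝ) : hessianMatrix (f + g) x = hessianMatrix f x + hessianMatrix g x := by
  ext k l
  simp [hessianMatrix, iteratedFDeriv_add_apply hf.contDiffAt hg.contDiffAt]

lemma hessianMatrix_expSum (c : ι → ℝ) (ℓ : ι → (m → ℝ) →L[ℝ] ℝ) (x : m → ℝ) :
    hessianMatrix (expSum c ℓ) x = ∑ t, (c t * exp (ℓ t x)) •
      Matrix.vecMulVec (fun k => ℓ t (Pi.single k 1)) (fun k => ℓ t (Pi.single k 1)) := by
  ext k l
  simp [hessianMatrix, iteratedFDeriv_two_expSum_apply, Matrix.sum_apply, Matrix.vecMulVec_apply]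

lemma posSemidef_hessianMatrix_expSum (c : ι → ℝ) (ℓ : ι → (m → ℝ) →L[ℝ] ℝ)
    (hc : ∀ t, 0 ≤ c t) (x : m → ℝ) : (hessianMatrix (expSum c ℓ) x).PosSemidef := by
  rw [hessianMatrix_expSum]
  have hv (v : m → ℝ) : (Matrix.vecMulVec v v).PosSemidef := by
    simpa using Matrix.posSemidef_vecMulVec_self_star v
  exact Matrix.posSemidef_sum _ fun t _ => (hv _).smul (mul_nonneg (hc t) (exp_pos _).le)

lemma hessianMatrix_expSum_two_smul_proj (x : m → ℝ) :
    hessianMatrix (expSum (fun _ : m => (1 / 2 : ℝ)) fun k => (2 : ℝ) • .proj k) x =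
      Matrix.diagonal fun k => 2 * exp (2 * x k) := by
  ext k l
  rw [hessianMatrix_expSum]
  by_cases hkl : k = l
  · subst hkl
    simp only [Matrix.sum_apply, Matrix.smul_apply, Matrix.vecMulVec_apply, smul_apply,
      ContinuousLinearMap.proj_apply, Pi.single_apply, smul_eq_mul, mul_ite, mul_one, mul_zero,
      ite_mul, zero_mul, sum_ite_eq', mem_univ, ↓reduceIte, Matrix.diagonal_apply_eq]
    ring
  · simp [Matrix.sum_apply, Matrix.vecMulVec_apply, Pi.single_apply, hkl, Ne.symm hkl]

end Hessian

theorem H_strictConvex_and_hessian_dominates_general (I J : ℕ)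
    (P : Fin I → Fin J → ℝ) (hP : ∀ i j, 0 ≤ P i j) :
    let H : (Fin (I + J) → ℝ) → ℝ := fun b =>
      (1 / 2) * ∑ k, Real.exp (2 * b k) +
        ∑ i : Fin I, ∑ j : Fin J,
          P i j * Real.exp (b (Fin.castAdd J i) + b (Fin.natAdd I j));
    StrictConvexOn ℝ Set.univ H ∧
    ∀ b : Fin (I + J) → ℝ,
      Matrix.PosSemidef
        ((Matrix.of fun k l : Fin (I + J) =>
            iteratedFDeriv ℝ 2 H b ![Pi.single k 1, Pi.single l 1]) -
          Matrix.diagonal (fun k => 2 * Real.exp (2 * b k))) := by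
  intro H
  let D := expSum (fun _ : Fin (I + J) => (1 / 2 : ℝ)) fun k => (2 : ℝ) • .proj k
  let C := expSum (fun p : Fin I × Fin J => P p.1 p.2) fun p =>
    (.proj (Fin.castAdd J p.1) + .proj (Fin.natAdd I p.2) : (Fin (I + J) → ℝ) →L[ℝ] ℝ)
  have hH : H = D + C := by
    funext b
    simp [H, D, C, expSum, mul_sum, Fintype.sum_prod_type]
  have hD : StrictConvexOn ℝ Set.univ D :=
    strictConvexOn_expSum _ _ (fun _ => by norm_num) fun x y hxy =>
      funext fun k => by simpa using congrFun hxy k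
  have hC : ConvexOn ℝ Set.univ C := convexOn_expSum _ _ fun p => hP p.1 p.2
  refine ⟨hH ▸ hD.add_convexOn hC, fun b => ?_⟩
  change (hessianMatrix H b - _).PosSemidef
  rw [hH, hessianMatrix_add (contDiff_expSum _ _) (contDiff_expSum _ _),
    hessianMatrix_expSum_two_smul_proj, add_sub_cancel_left]
  exact posSemidef_hessianMatrix_expSum (fun p : Fin I × Fin J => P p.1 p.2) _
    (fun p => hP p.1 p.2) b

/-- **Strict convexity of `H` and Loewner domination of its Hessian.**
For `Π` with nonnegative entries, the function
`H(b) = (1/2) Σ_k e^{2 b_k} + Σ_{i,j} Π_{ij} e^{b_i + b_{I+j}}` on `ℝ^{I+J}` is strictly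
convex, and its Hessian matrix at every point `b` dominates the positive diagonal matrix
`diag(2 e^{2 b_1}, …, 2 e^{2 b_{I+J}})` in the Loewner order. -/
theorem H_strictConvex_and_hessian_dominates (I J : ℕ) (hI : 0 < I) (hJ : 0 < J)
    (P : Fin I → Fin J → ℝ) (hP : ∀ i j, 0 ≤ P i j) :
    let H : (Fin (I + J) → ℝ) → ℝ := fun b =>
      (1 / 2) * ∑ k, Real.exp (2 * b k) +
        ∑ i : Fin I, ∑ j : Fin J,
          P i j * Real.exp (b (Fin.castAdd J i) + b (Fin.natAdd I j));
    StrictConvexOn ℝ Set.univ H ∧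
    ∀ b : Fin (I + J) → ℝ,
      Matrix.PosSemidef
        ((Matrix.of fun k l : Fin (I + J) =>
            iteratedFDeriv ℝ 2 H b ![Pi.single k 1, Pi.single l 1]) -
          Matrix.diagonal (fun k => 2 * Real.exp (2 * b k))) :=
  H_strictConvex_and_hessian_dominates_general I J P hP
end

section
/- For Π with nonnegative entries and ν with strictly positive entries, every sublevel set {β in the open positive orthant of ℝ^{I+J} : E(β) ≤ λ} of the function E(β) = (1/2) Σ_k β_k² + Σ_{i,j} Π_{ij} β_i β_{I+j} − Σ_k ν_k log β_k is compact (bounded and closed, contained in the open positive orthant). -/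
open Finset Real

private lemma aux_lb (x v : ℝ) (hx : 0 < x) (hv : 0 < v) :
    -(v ^ 2 / 2) ≤ x ^ 2 / 2 - v * Real.log x := by
  have h := Real.log_le_sub_one_of_pos hx
  nlinarith [sq_nonneg (x - v), mul_le_mul_of_nonneg_left h hv.le]

private lemma aux_up (x v c : ℝ) (hx : 0 < x) (hv : 0 < v)
    (h : x ^ 2 / 2 - v * Real.log x ≤ c) : (x - v) ^ 2 ≤ 2 * c + v ^ 2 := by
  have hlog := Real.log_le_sub_one_of_pos hx
  nlinarith [mul_le_mul_of_nonneg_left hlog hv.le]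

private lemma aux_low (x v c : ℝ) (hx : 0 < x) (hv : 0 < v)
    (h : x ^ 2 / 2 - v * Real.log x ≤ c) : -c / v ≤ Real.log x := by
  rw [div_le_iff₀ hv]
  nlinarith [sq_nonneg x]

/-- **Compactness of the sublevel sets of the Choo–Siow energy.**
For `Π` nonnegative and `ν` positive, every sublevel set
`{β in the open positive orthant : E(β) ≤ λ}` of
`E(β) = (1/2) Σ_k β_k² + Σ_{i,j} Π_{ij} β_i β_{I+j} − Σ_k ν_k log β_k`
is compact and contained in the open positive orthant. -/
theorem E_sublevel_compact (I J : ℕ) (hI : 0 < I) (hJ : 0 < J)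
    (P : Fin I → Fin J → ℝ) (hP : ∀ i j, 0 ≤ P i j)
    (ν : Fin (I + J) → ℝ) (hν : ∀ k, 0 < ν k) (lam : ℝ) :
    let E : (Fin (I + J) → ℝ) → ℝ := fun β =>
      (1 / 2) * ∑ k, β k ^ 2 +
        (∑ i : Fin I, ∑ j : Fin J,
          P i j * β (Fin.castAdd J i) * β (Fin.natAdd I j)) -
        ∑ k, ν k * Real.log (β k);
    IsCompact {β : Fin (I + J) → ℝ | (∀ k, 0 < β k) ∧ E β ≤ lam} ∧
      {β : Fin (I + J) → ℝ | (∀ k, 0 < β k) ∧ E β ≤ lam} ⊆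
        {β : Fin (I + J) → ℝ | ∀ k, 0 < β k} := by
  intro E
  set S : Set (Fin (I + J) → ℝ) :=
    {β : Fin (I + J) → ℝ | (∀ k, 0 < β k) ∧ E β ≤ lam} with hS
  set C : ℝ := lam + ∑ k : Fin (I + J), (ν k) ^ 2 / 2 with hCdef
  -- cross term nonneg
  have hcross : ∀ β : Fin (I + J) → ℝ, (∀ k, 0 < β k) →
      0 ≤ ∑ i : Fin I, ∑ j : Fin J,
        P i j * β (Fin.castAdd J i) * β (Fin.natAdd I j) := by
    intro β hβ
    apply Finset.sum_nonneg; intro i _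
    apply Finset.sum_nonneg; intro j _
    exact mul_nonneg (mul_nonneg (hP i j) (hβ (Fin.castAdd J i)).le)
      (hβ (Fin.natAdd I j)).le
  have hsplit : ∀ β : Fin (I + J) → ℝ,
      ∑ k, ((β k) ^ 2 / 2 - ν k * Real.log (β k)) =
        (1 / 2) * ∑ k, (β k) ^ 2 - ∑ k, ν k * Real.log (β k) := by
    intro β
    rw [Finset.sum_sub_distrib, Finset.mul_sum]
    congr 1
    exact Finset.sum_congr rfl fun k _ => by ring
  -- key per-coordinate bound
  have key : ∀ β ∈ S, ∀ k, (β k) ^ 2 / 2 - ν k * Real.log (β k) ≤ C := by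
    intro β hβ k
    obtain ⟨hpos, hE⟩ := hβ
    have hsum : ∑ k, ((β k) ^ 2 / 2 - ν k * Real.log (β k)) ≤ lam := by
      have h1 := hsplit β
      have h2 := hcross β hpos
      replace hE : (1 / 2) * ∑ k, (β k) ^ 2 +
          (∑ i : Fin I, ∑ j : Fin J,
            P i j * β (Fin.castAdd J i) * β (Fin.natAdd I j)) -
          ∑ k, ν k * Real.log (β k) ≤ lam := hE
      linarith
    have h3 : ((β k) ^ 2 / 2 - ν k * Real.log (β k)) +
        ∑ k' ∈ Finset.univ.erase k, ((β k') ^ 2 / 2 - ν k' * Real.log (β k')) =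
        ∑ k', ((β k') ^ 2 / 2 - ν k' * Real.log (β k')) :=
      Finset.add_sum_erase _ (fun k' => (β k') ^ 2 / 2 - ν k' * Real.log (β k'))
        (Finset.mem_univ k)
    have h4 : ∑ k' ∈ Finset.univ.erase k, (-(ν k' ^ 2 / 2)) ≤
        ∑ k' ∈ Finset.univ.erase k, ((β k') ^ 2 / 2 - ν k' * Real.log (β k')) :=
      Finset.sum_le_sum fun k' _ => aux_lb _ _ (hpos k') (hν k')
    have h5 : ∑ k' ∈ Finset.univ.erase k, (ν k' ^ 2 / 2) ≤
        ∑ k' : Fin (I + J), (ν k') ^ 2 / 2 := by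
      apply Finset.sum_le_sum_of_subset_of_nonneg (Finset.subset_univ _)
      intro k' _ _; positivity
    have h6 : ∑ k' ∈ Finset.univ.erase k, (-(ν k' ^ 2 / 2)) =
        -∑ k' ∈ Finset.univ.erase k, (ν k' ^ 2 / 2) := by
      rw [Finset.sum_neg_distrib]
    rw [h6] at h4
    linarith
  -- bounds
  set a : Fin (I + J) → ℝ := fun k => Real.exp (-C / ν k) with ha_def
  set b : Fin (I + J) → ℝ := fun k => ν k + Real.sqrt (2 * C + (ν k) ^ 2) with hb_def
  have ha : ∀ k, 0 < a k := fun k => Real.exp_pos _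
  have hlow : ∀ β ∈ S, ∀ k, a k ≤ β k := by
    intro β hβ k
    have hk := key β hβ k
    have hpos := hβ.1 k
    have h1 : -C / ν k ≤ Real.log (β k) := aux_low _ _ _ hpos (hν k) hk
    calc a k = Real.exp (-C / ν k) := rfl
      _ ≤ Real.exp (Real.log (β k)) := Real.exp_le_exp.mpr h1
      _ = β k := Real.exp_log hpos
  have hup : ∀ β ∈ S, ∀ k, β k ≤ b k := by
    intro β hβ k
    have hk := key β hβ k
    have hpos := hβ.1 k
    have hsq : (β k - ν k) ^ 2 ≤ 2 * C + (ν k) ^ 2 :=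
      aux_up _ _ _ hpos (hν k) hk
    have h2 : β k - ν k ≤ Real.sqrt (2 * C + (ν k) ^ 2) := by
      calc β k - ν k ≤ |β k - ν k| := le_abs_self _
        _ = Real.sqrt ((β k - ν k) ^ 2) := (Real.sqrt_sq_eq_abs _).symm
        _ ≤ Real.sqrt (2 * C + (ν k) ^ 2) := Real.sqrt_le_sqrt hsq
    simp only [hb_def]; linarith
  -- the compact box
  set box : Set (Fin (I + J) → ℝ) := Set.univ.pi fun k => Set.Icc (a k) (b k)
    with hbox_def
  have hbox_compact : IsCompact box := isCompact_univ_pi fun k => isCompact_Icc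
  -- continuous modification of E
  set Et : (Fin (I + J) → ℝ) → ℝ := fun β =>
    (1 / 2) * ∑ k, β k ^ 2 +
      (∑ i : Fin I, ∑ j : Fin J,
        P i j * β (Fin.castAdd J i) * β (Fin.natAdd I j)) -
      ∑ k, ν k * Real.log (max (β k) (a k)) with hEt_def
  have hEt_cont : Continuous Et := by
    apply Continuous.sub
    · apply Continuous.add
      · exact continuous_const.mul (continuous_finset_sum _ fun k _ =>
          (continuous_apply k).pow 2)
      · exact continuous_finset_sum _ fun i _ => continuous_finset_sum _ fun j _ =>
          ((continuous_const.mul (continuous_apply _)).mul (continuous_apply _))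
    · apply continuous_finset_sum; intro k _
      apply continuous_const.mul
      apply Continuous.log ((continuous_apply k).max continuous_const)
      intro β
      exact (lt_of_lt_of_le (ha k) (le_max_right _ _)).ne'
  have hagree : ∀ β ∈ box, Et β = E β := by
    intro β hβ
    have : ∀ k, max (β k) (a k) = β k := fun k =>
      max_eq_left ((hβ k (Set.mem_univ k)).1)
    simp only [hEt_def]
    congr 1
    exact Finset.sum_congr rfl fun k _ => by rw [this k]
  have hSeq : S = box ∩ {β | Et β ≤ lam} := by
    ext β
    constructor
    · intro hβ
      have hmem : β ∈ box := by
        intro k _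
        exact ⟨hlow β hβ k, hup β hβ k⟩
      exact ⟨hmem, by rw [Set.mem_setOf_eq, hagree β hmem]; exact hβ.2⟩
    · rintro ⟨hmem, hle⟩
      refine ⟨fun k => lt_of_lt_of_le (ha k) (hmem k (Set.mem_univ k)).1, ?_⟩
      rw [← hagree β hmem]; exact hle
  constructor
  · rw [hSeq]
    exact hbox_compact.inter_right (isClosed_le hEt_cont continuous_const)
  · exact fun β hβ => hβ.1
end

section
/- For Π with nonnegative entries and ν with strictly positive entries, the function E(β) = (1/2) Σ_k β_k² + Σ_{i,j} Π_{ij} β_i β_{I+j} − Σ_k ν_k log β_k attains its minimum on the open positive orthant of ℝ^{I+J}. -/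
open Finset Real

lemma aux1 {c t : ℝ} (hc : 0 < c) (ht : 0 < t) :
    c - c ^ 2 / 2 ≤ (1 / 2) * t ^ 2 - c * Real.log t := by
  nlinarith [mul_le_mul_of_nonneg_left (Real.log_le_sub_one_of_pos ht) hc.le,
    sq_nonneg (t - c)]

lemma aux2 {c t M : ℝ} (hc : 0 < c) (ht : 0 < t)
    (h : (1 / 2) * t ^ 2 - c * Real.log t ≤ M) : Real.exp (-(M / c)) ≤ t := by
  have h1 : -M ≤ c * Real.log t := by nlinarith [sq_nonneg t]
  have h2 : -(M / c) ≤ Real.log t := by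
    rw [← neg_div, div_le_iff₀ hc]
    nlinarith
  calc Real.exp (-(M / c)) ≤ Real.exp (Real.log t) := Real.exp_le_exp.mpr h2
    _ = t := Real.exp_log ht

lemma aux3 {c t M : ℝ} (hc : 0 < c) (ht : 0 < t) (hM : 1 ≤ M)
    (h : (1 / 2) * t ^ 2 - c * Real.log t ≤ M) : t ≤ 2 * M + 2 * c + 1 := by
  rcases le_total t 1 with h1 | h1
  · linarith
  · nlinarith [mul_le_mul_of_nonneg_left (Real.log_le_sub_one_of_pos ht) hc.le,
      mul_nonneg (sub_nonneg.mpr h1) (by linarith : (0:ℝ) ≤ M)]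

/-- **Existence of a minimizer of the Choo–Siow energy on the positive orthant.**
For `Π` nonnegative and `ν` positive, the function
`E(β) = (1/2) Σ_k β_k² + Σ_{i,j} Π_{ij} β_i β_{I+j} − Σ_k ν_k log β_k`
attains its minimum on the open positive orthant of `ℝ^{I+J}`. -/
theorem E_attains_minimum (I J : ℕ) (hI : 0 < I) (hJ : 0 < J)
    (P : Fin I → Fin J → ℝ) (hP : ∀ i j, 0 ≤ P i j)
    (ν : Fin (I + J) → ℝ) (hν : ∀ k, 0 < ν k) :
    let E : (Fin (I + J) → ℝ) → ℝ := fun β =>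
      (1 / 2) * ∑ k, β k ^ 2 +
        (∑ i : Fin I, ∑ j : Fin J,
          P i j * β (Fin.castAdd J i) * β (Fin.natAdd I j)) -
        ∑ k, ν k * Real.log (β k);
    ∃ β₀ : Fin (I + J) → ℝ, (∀ k, 0 < β₀ k) ∧
      ∀ β : Fin (I + J) → ℝ, (∀ k, 0 < β k) → E β₀ ≤ E β := by
  intro E
  classical
  have hEd : ∀ β : Fin (I + J) → ℝ, E β =
      (1 / 2) * ∑ k, β k ^ 2 +
        (∑ i : Fin I, ∑ j : Fin J,
          P i j * β (Fin.castAdd J i) * β (Fin.natAdd I j)) -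
        ∑ k, ν k * Real.log (β k) := fun β => rfl
  set C : ℝ := E (fun _ => 1) with hC
  set L : Fin (I + J) → ℝ := fun k => ν k - (ν k) ^ 2 / 2 with hLdef
  set M : ℝ := max (C + ∑ k, |L k|) 1 with hMdef
  have hM1 : (1 : ℝ) ≤ M := le_max_right _ _
  have hMC : C + ∑ k, |L k| ≤ M := le_max_left _ _
  set lo : Fin (I + J) → ℝ := fun k => Real.exp (-(M / ν k)) with hlodef
  set hi : Fin (I + J) → ℝ := fun k => 2 * M + 2 * ν k + 1 with hhidef
  have hlo_pos : ∀ k, 0 < lo k := fun k => Real.exp_pos _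
  have hlo1 : ∀ k, lo k ≤ 1 := by
    intro k
    have hd : 0 < M / ν k := div_pos (lt_of_lt_of_le one_pos hM1) (hν k)
    calc lo k = Real.exp (-(M / ν k)) := rfl
      _ ≤ Real.exp 0 := Real.exp_le_exp.mpr (by linarith)
      _ = 1 := Real.exp_zero
  have hhi1 : ∀ k, (1 : ℝ) ≤ hi k := by
    intro k
    have := hν k
    simp only [hhidef]
    linarith
  have hone : (fun _ => (1 : ℝ)) ∈ Set.Icc lo hi :=
    ⟨fun k => hlo1 k, fun k => hhi1 k⟩
  -- key: sublevel set is in the box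
  have hkey : ∀ β : Fin (I + J) → ℝ, (∀ k, 0 < β k) → E β ≤ C →
      β ∈ Set.Icc lo hi := by
    intro β hβ hEβ
    have hcross : 0 ≤ ∑ i : Fin I, ∑ j : Fin J,
        P i j * β (Fin.castAdd J i) * β (Fin.natAdd I j) :=
      Finset.sum_nonneg fun i _ => Finset.sum_nonneg fun j _ =>
        mul_nonneg (mul_nonneg (hP i j) (hβ _).le) (hβ _).le
    have hsum : ∑ k, ((1 / 2) * β k ^ 2 - ν k * Real.log (β k)) ≤ C := by
      have h2 : (1 / 2) * ∑ k, β k ^ 2 - ∑ k, ν k * Real.log (β k) ≤ C := by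
        rw [hEd β] at hEβ; linarith
      calc ∑ k, ((1 / 2) * β k ^ 2 - ν k * Real.log (β k))
          = (1 / 2) * ∑ k, β k ^ 2 - ∑ k, ν k * Real.log (β k) := by
            rw [Finset.sum_sub_distrib, Finset.mul_sum]
        _ ≤ C := h2
    have hgk : ∀ k, (1 / 2) * β k ^ 2 - ν k * Real.log (β k) ≤ M := by
      intro k
      set g : Fin (I + J) → ℝ := fun l => (1 / 2) * β l ^ 2 - ν l * Real.log (β l)
        with hgdef
      have hsplit : g k + ∑ l ∈ Finset.univ.erase k, g l = ∑ l, g l :=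
        Finset.add_sum_erase _ _ (Finset.mem_univ k)
      have h3 : ∀ l, L l ≤ g l := fun l => aux1 (hν l) (hβ l)
      have h4 : ∑ l ∈ Finset.univ.erase k, (-|L l|) ≤
          ∑ l ∈ Finset.univ.erase k, g l :=
        Finset.sum_le_sum fun l _ => le_trans (neg_abs_le _) (h3 l)
      have hsplit2 : (-|L k|) + ∑ l ∈ Finset.univ.erase k, (-|L l|) =
          ∑ l, (-|L l|) := Finset.add_sum_erase _ (fun l => -|L l|) (Finset.mem_univ k)
      have h5 : -∑ l, |L l| ≤ ∑ l ∈ Finset.univ.erase k, (-|L l|) := by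
        have : ∑ l, (-|L l|) = -∑ l, |L l| := by rw [Finset.sum_neg_distrib]
        have habs : 0 ≤ |L k| := abs_nonneg _
        linarith [hsplit2, this]
      have h6 : g k ≤ M := by
        have := hsum
        have : g k = ∑ l, g l - ∑ l ∈ Finset.univ.erase k, g l := by linarith [hsplit]
        linarith [h4, h5, hsum]
      exact h6
    exact ⟨fun k => aux2 (hν k) (hβ k) (hgk k),
      fun k => aux3 (hν k) (hβ k) hM1 (hgk k)⟩
  have hK : IsCompact (Set.Icc lo hi) := isCompact_Icc
  have hcont : ContinuousOn E (Set.Icc lo hi) := by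
    have h1 : Continuous fun β : Fin (I + J) → ℝ => (1 / 2) * ∑ k, β k ^ 2 :=
      continuous_const.mul (continuous_finset_sum _ fun k _ => (continuous_apply k).pow 2)
    have h2 : Continuous fun β : Fin (I + J) → ℝ =>
        ∑ i : Fin I, ∑ j : Fin J,
          P i j * β (Fin.castAdd J i) * β (Fin.natAdd I j) :=
      continuous_finset_sum _ fun i _ => continuous_finset_sum _ fun j _ =>
        (continuous_const.mul (continuous_apply _)).mul (continuous_apply _)
    have h3 : ContinuousOn (fun β : Fin (I + J) → ℝ =>
        ∑ k, ν k * Real.log (β k)) (Set.Icc lo hi) := by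
      apply continuousOn_finset_sum
      intro k _
      exact continuousOn_const.mul
        (((continuous_apply k).continuousOn).log
          (fun β hβ => ne_of_gt (lt_of_lt_of_le (hlo_pos k) (hβ.1 k))))
    exact ((h1.continuousOn.add h2.continuousOn).sub h3)
  obtain ⟨β₀, hβ₀K, hmin⟩ := hK.exists_isMinOn ⟨_, hone⟩ hcont
  refine ⟨β₀, fun k => lt_of_lt_of_le (hlo_pos k) (hβ₀K.1 k), ?_⟩
  intro β hβ
  rcases le_total (E β) C with h | h
  · exact isMinOn_iff.mp hmin β (hkey β hβ h)
  · exact le_trans (isMinOn_iff.mp hmin _ hone) h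
end

section
/- If ε_0, ..., ε_J are independent random variables each with the standard Gumbel distribution (CDF exp(−e^{−x})) and η_0, ..., η_J are real constants, then for each j, the probability that η_j + ε_j ≥ η_k + ε_k for all k equals exp(η_j) / Σ_{k=0}^J exp(η_k). -/
/-!
Shifting by `η k`, each `η k + ε k` is Gumbel with location `η k`, i.e. has CDF
`exp (-exp (η k - x))`. Conditionally on `η j + ε j = t`, the other utilities are independently
below `t` with probability `∏_{k ≠ j} exp (-exp (η k - t)) = exp (-c e^{-t})`,
`c = ∑_{k ≠ j} e^{η k}`. Against the Gumbel density with location `η j`, the factor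
`exp (-c e^{-t})` tilts it into `e^{η j} / (e^{η j} + c)` times the Gumbel density with location
`log (e^{η j} + c)`, which integrates to one.
-/

open Finset Real Set Filter Topology MeasureTheory ProbabilityTheory

lemma StieltjesFunction.measure_eq_withDensity_of_hasDerivAt (F : StieltjesFunction ℝ)
    {f : ℝ → ℝ} (hF : ∀ x, HasDerivAt F (f x) x) (hf : Continuous f) :
    F.measure = volume.withDensity fun x ↦ ENNReal.ofReal (f x) := by
  refine Measure.ext_of_Ioc _ _ fun a b hab ↦ ?_
  have hf_nonneg : ∀ x, 0 ≤ f x := fun x ↦ (hF x).nonneg_of_monotone F.mono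
  rw [F.measure_Ioc, withDensity_apply _ measurableSet_Ioc,
    ← ofReal_integral_eq_lintegral_ofReal hf.integrableOn_Ioc (ae_of_all _ hf_nonneg),
    ← intervalIntegral.integral_of_le hab.le,
    intervalIntegral.integral_eq_sub_of_hasDerivAt (fun x _ ↦ hF x) (hf.intervalIntegrable a b)]

noncomputable def gumbelCDF (m : ℝ) : StieltjesFunction ℝ where
  toFun x := exp (-exp (m - x))
  mono' _ _ hxy := exp_le_exp.2 <| neg_le_neg <| exp_le_exp.2 <| by linarith
  right_continuous' _ := (by fun_prop : Continuous fun x ↦ exp (-exp (m - x))).continuousWithinAt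

lemma gumbelCDF_apply (m x : ℝ) : gumbelCDF m x = exp (-exp (m - x)) := rfl

lemma tendsto_gumbelCDF_atBot (m : ℝ) : Tendsto (gumbelCDF m) atBot (𝓝 0) := by
  have : Tendsto (fun x ↦ m - x) atBot atTop := by
    simpa [sub_eq_add_neg] using tendsto_atTop_add_const_left _ m tendsto_neg_atBot_atTop
  exact tendsto_exp_atBot.comp (tendsto_neg_atTop_atBot.comp (tendsto_exp_atTop.comp this))

lemma tendsto_gumbelCDF_atTop (m : ℝ) : Tendsto (gumbelCDF m) atTop (𝓝 1) := by
  have : Tendsto (fun x ↦ m - x) atTop atBot := by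
    simpa [sub_eq_add_neg] using tendsto_atBot_add_const_left _ m tendsto_neg_atTop_atBot
  have h : Tendsto (fun x ↦ -exp (m - x)) atTop (𝓝 0) := by
    simpa using (tendsto_exp_atBot.comp this).neg
  rw [← exp_zero]
  exact (continuous_exp.tendsto 0).comp h

lemma hasDerivAt_gumbelCDF (m x : ℝ) :
    HasDerivAt (gumbelCDF m) (exp (m - x) * exp (-exp (m - x))) x :=
  ((hasDerivAt_id' x).const_sub m).exp.neg.exp.congr_deriv <| by simp only [Pi.neg_apply]; ring

noncomputable def gumbelMeasure (m : ℝ) : Measure ℝ := (gumbelCDF m).measure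

instance (m : ℝ) : IsProbabilityMeasure (gumbelMeasure m) :=
  (gumbelCDF m).isProbabilityMeasure (tendsto_gumbelCDF_atBot m) (tendsto_gumbelCDF_atTop m)

lemma gumbelMeasure_Iic (m x : ℝ) :
    gumbelMeasure m (Iic x) = ENNReal.ofReal (gumbelCDF m x) := by
  rw [gumbelMeasure, (gumbelCDF m).measure_Iic (tendsto_gumbelCDF_atBot m), sub_zero]

lemma gumbelMeasure_eq_withDensity (m : ℝ) :
    gumbelMeasure m = volume.withDensity
      fun x ↦ ENNReal.ofReal (exp (m - x) * exp (-exp (m - x))) :=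
  (gumbelCDF m).measure_eq_withDensity_of_hasDerivAt (hasDerivAt_gumbelCDF m) (by fun_prop)

lemma prod_gumbelMeasure_Iic {ι : Type*} (s : Finset ι) (m : ι → ℝ) (t : ℝ) :
    ∏ i ∈ s, gumbelMeasure (m i) (Iic t) =
      ENNReal.ofReal (exp (-((∑ i ∈ s, exp (m i)) * exp (-t)))) := by
  simp only [gumbelMeasure_Iic, gumbelCDF_apply]
  rw [← ENNReal.ofReal_prod_of_nonneg fun _ _ ↦ (exp_pos _).le]
  simp only [← exp_sum, ← sum_neg_distrib, sum_mul, ← exp_add, sub_eq_add_neg]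

lemma lintegral_exp_neg_mul_exp_neg_gumbelMeasure (m : ℝ) {a : ℝ} (ha : 0 ≤ a) :
    ∫⁻ t, ENNReal.ofReal (exp (-(a * exp (-t)))) ∂gumbelMeasure m =
      ENNReal.ofReal (exp m / (exp m + a)) := by
  set L := log (exp m + a)
  have hL : exp L = exp m + a := exp_log (by positivity)
  have htilt : ∀ t, ENNReal.ofReal (exp (m - t) * exp (-exp (m - t))) *
      ENNReal.ofReal (exp (-(a * exp (-t)))) = ENNReal.ofReal (exp m / (exp m + a)) *
      ENNReal.ofReal (exp (L - t) * exp (-exp (L - t))) := by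
    intro t
    rw [← ENNReal.ofReal_mul (by positivity), ← ENNReal.ofReal_mul (by positivity)]
    congr 1
    rw [exp_sub, exp_sub, hL, exp_neg t, mul_assoc, ← exp_add]
    field_simp
    ring_nf
  rw [gumbelMeasure_eq_withDensity, lintegral_withDensity_eq_lintegral_mul _ (by fun_prop)
    (by fun_prop)]
  simp only [Pi.mul_apply, htilt]
  rw [lintegral_const_mul _ (by fun_prop), ← setLIntegral_univ, ← withDensity_apply _ .univ,
    ← gumbelMeasure_eq_withDensity, measure_univ, mul_one]

lemma measure_forall_succAbove_le_eq_lintegral {Ω : Type*} [MeasurableSpace Ω] {μ : Measure Ω}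
    {n : ℕ} {X : Fin (n + 1) → Ω → ℝ} (hX : ∀ k, Measurable (X k)) (hindep : iIndepFun X μ)
    (j : Fin (n + 1)) :
    μ {ω | ∀ i, X (j.succAbove i) ω ≤ X j ω} =
      ∫⁻ t, ∏ i, μ.map (X (j.succAbove i)) (Iic t) ∂μ.map (X j) := by
  have := hindep.isProbabilityMeasure
  let B : Set (ℝ × (Fin n → ℝ)) := {p | p.2 ≤ fun _ ↦ p.1}
  have hB : MeasurableSet B := measurableSet_le (by fun_prop) (by fun_prop)
  have hevent : {ω | ∀ i, X (j.succAbove i) ω ≤ X j ω} =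
      (fun ω k ↦ X k ω) ⁻¹' (MeasurableEquiv.piFinSuccAbove (fun _ ↦ ℝ) j ⁻¹' B) := rfl
  rw [hevent, ← Measure.map_apply (measurable_pi_lambda _ hX)
      ((MeasurableEquiv.piFinSuccAbove _ j).measurable hB),
    hindep.map_fun_eq_pi_map fun k ↦ (hX k).aemeasurable,
    (measurePreserving_piFinSuccAbove _ j).measure_preimage hB.nullMeasurableSet,
    Measure.prod_apply hB]
  refine lintegral_congr fun t ↦ ?_
  have hslice : Prod.mk t ⁻¹' B = univ.pi fun _ ↦ Iic t := by rw [pi_univ_Iic]; rfl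
  rw [hslice, Measure.pi_pi]

/-- **Choice probabilities for i.i.d. Gumbel noise (multinomial logit).**
If `ε_0, …, ε_J` are independent random variables each with the standard Gumbel
distribution (CDF `exp(−e^{−x})`) and `η_0, …, η_J` are real constants, then for each `j`
the probability that `η_j + ε_j ≥ η_k + ε_k` for all `k` equals
`e^{η_j} / Σ_{k} e^{η_k}`. -/
theorem gumbel_choice_probability {Ω : Type*} [MeasurableSpace Ω]
    (μ : Measure Ω) [IsProbabilityMeasure μ]
    (J : ℕ) (η : Fin (J + 1) → ℝ) (ε : Fin (J + 1) → Ω → ℝ)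
    (hmeas : ∀ k, Measurable (ε k))
    (hindep : iIndepFun ε μ)
    (hcdf : ∀ (k) (x : ℝ),
      μ {ω | ε k ω ≤ x} = ENNReal.ofReal (Real.exp (-Real.exp (-x))))
    (j : Fin (J + 1)) :
    μ {ω | ∀ k, η k + ε k ω ≤ η j + ε j ω} =
      ENNReal.ofReal (Real.exp (η j) / ∑ k, Real.exp (η k)) := by
  set X : Fin (J + 1) → Ω → ℝ := fun k ω ↦ η k + ε k ω
  have hX : ∀ k, Measurable (X k) := fun k ↦ (hmeas k).const_add (η k)
  have hX_indep : iIndepFun X μ := hindep.comp (fun k x ↦ η k + x) fun k ↦ measurable_const_add _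
  have hX_law : ∀ k, μ.map (X k) = gumbelMeasure (η k) := by
    refine fun k ↦ Measure.ext_of_Iic _ _ fun x ↦ ?_
    have hshift : X k ⁻¹' Iic x = {ω | ε k ω ≤ x - η k} := by
      ext ω
      exact (le_sub_iff_add_le' (b := ε k ω)).symm
    rw [Measure.map_apply (hX k) measurableSet_Iic, hshift, hcdf, gumbelMeasure_Iic,
      gumbelCDF_apply, neg_sub]
  have hevent :
      {ω | ∀ k, η k + ε k ω ≤ η j + ε j ω} = {ω | ∀ i, X (j.succAbove i) ω ≤ X j ω} := by
    ext ω
    simp [X, j.forall_iff_succAbove]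
  rw [hevent, measure_forall_succAbove_le_eq_lintegral hX hX_indep j]
  simp only [hX_law, prod_gumbelMeasure_Iic]
  rw [lintegral_exp_neg_mul_exp_neg_gumbelMeasure _ (by positivity), Fin.sum_univ_succAbove _ j]
end
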